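/- arXiv:2306.05950 — 6 statements merged into one kernel-verified Lean document; each statement's English description precedes it below -/
import Mathlib

section
/- Let C be a symmetric monoidal category with equalisers, H a Hopf monoid in C, and δ_1,…,δ_m: M → H⊗M pairwise commuting H-comodule structures on an object M, meaning (1_H⊗δ_j)∘δ_i = (τ_{H,H}⊗1_M)∘(1_H⊗δ_i)∘δ_j for i ≠ j. For a nonempty subset ℱ = {i_1,…,i_k} ⊆ {1,…,m} let δ_ℱ: M → H^{⊗k}⊗M denote the composite (1_{H^{⊗(k-1)}}⊗δ_{i_k})∘…∘(1_H⊗δ_{i_2})∘δ_{i_1}, which is an H^{⊗k}-comodule structure, and let ι_ℱ: M^{coℱ} → M denote the equaliser of δ_ℱ and η^{⊗k}⊗1_M. Then for every nonempty subset ℱ' ⊆ ℱ (with |ℱ'| = k') one has δ_{ℱ'}∘ι_ℱ = (η^{⊗k'}⊗1_M)∘ι_ℱ, and there is a unique morphism ξ: M^{coℱ} → M^{coℱ'} with ι_{ℱ'}∘ξ = ι_ℱ; moreover ξ is a monomorphism. -/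
/-!
Applying the counit `ε` to the tensor factors of `H^{⊗|ℱ|}` not indexed by `ℱ'` gives a morphism
`p : H^{⊗|ℱ|} → H^{⊗|ℱ'|}` with `(p ⊗ 1_M) ∘ δ_ℱ = δ_{ℱ'}` (counit axiom of each `δ_i`) and
`p ∘ η^{⊗|ℱ|} = η^{⊗|ℱ'|}` (since `ε ∘ η = 1`). So whatever equalises `δ_ℱ` and `η^{⊗|ℱ|} ⊗ 1_M`
also equalises `δ_{ℱ'}` and `η^{⊗|ℱ'|} ⊗ 1_M`; `ξ` is the induced map of equalisers, and it is
mono because `ι_{ℱ'} ∘ ξ = ι_ℱ` is.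
-/

open CategoryTheory MonoidalCategory Limits

namespace Stmt5

variable {C : Type*} [Category C] [MonoidalCategory C]

/-- The `n`-fold tensor power `H^{⊗n}` (right-nested). -/
def tensorPow (H : C) : ℕ → C
  | 0 => 𝟙_ C
  | n + 1 => H ⊗ tensorPow H n

/-- The iterated coaction `(1_{H^{⊗(k-1)}} ⊗ δ_{i_k}) ∘ … ∘ (1_H ⊗ δ_{i₂}) ∘ δ_{i₁}` of
`H^{⊗k}` on `M` determined by a list `[i₁, …, i_k]` of indices. -/
def coactList {H M : C} {ι : Type*} (d : ι → (M ⟶ H ⊗ M)) :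
    (l : List ι) → (M ⟶ tensorPow H l.length ⊗ M)
  | [] => (λ_ M).inv
  | i :: l => d i ≫ (H ◁ coactList d l) ≫ (α_ H (tensorPow H l.length) M).inv

/-- The iterated unit `η^{⊗n} : 𝟙 ⟶ H^{⊗n}`. -/
def unitPow {H : C} (η : 𝟙_ C ⟶ H) : (n : ℕ) → (𝟙_ C ⟶ tensorPow H n)
  | 0 => 𝟙 _
  | n + 1 => (λ_ (𝟙_ C)).inv ≫ (η ⊗ₘ unitPow η n)

variable {H M : C} {ι : Type*}

lemma coactList_cons_whiskerRight_counit {d : ι → (M ⟶ H ⊗ M)}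
    {ε : H ⟶ 𝟙_ C} (hε : ∀ i, d i ≫ (ε ▷ M) = (λ_ M).inv) (i : ι) (l : List ι) {X : C}
    (q : tensorPow H l.length ⟶ X) :
    coactList d (i :: l) ≫ (((ε ▷ tensorPow H l.length) ≫ (λ_ _).hom ≫ q) ▷ M) =
      coactList d l ≫ (q ▷ M) := by
  dsimp only [coactList, List.length_cons, tensorPow]
  simp only [Category.assoc, comp_whiskerRight]
  rw [← associator_inv_naturality_left_assoc, whisker_exchange_assoc, reassoc_of% (hε i),
    ← leftUnitor_inv_naturality_assoc, leftUnitor_tensor_inv_assoc]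
  simp

lemma unitPow_succ_comp_counit {η : 𝟙_ C ⟶ H} {ε : H ⟶ 𝟙_ C} (hηε : η ≫ ε = 𝟙 _)
    (n : ℕ) {X : C} (q : tensorPow H n ⟶ X) :
    unitPow η (n + 1) ≫ (ε ▷ tensorPow H n) ≫ (λ_ _).hom ≫ q = unitPow η n ≫ q := by
  dsimp only [unitPow, tensorPow]
  simp [← tensorHom_id, tensorHom_comp_tensorHom_assoc, hηε]

lemma coactList_cons_whiskerRight_whiskerLeft (d : ι → (M ⟶ H ⊗ M))
    (i : ι) {l : List ι} {X : C} (p : tensorPow H l.length ⟶ X) :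
    coactList d (i :: l) ≫ ((H ◁ p) ▷ M) =
      d i ≫ (H ◁ (coactList d l ≫ (p ▷ M))) ≫ (α_ H X M).inv := by
  dsimp only [coactList, List.length_cons, tensorPow]
  simp only [Category.assoc, MonoidalCategory.whiskerLeft_comp, associator_inv_naturality_middle]

lemma unitPow_succ_comp_whiskerLeft (η : 𝟙_ C ⟶ H) {n : ℕ} {X : C}
    (p : tensorPow H n ⟶ X) :
    unitPow η (n + 1) ≫ (H ◁ p) = (λ_ (𝟙_ C)).inv ≫ (η ⊗ₘ (unitPow η n ≫ p)) := by
  dsimp only [unitPow, tensorPow]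
  rw [Category.assoc, ← id_tensorHom, tensorHom_comp_tensorHom, Category.comp_id]

lemma exists_proj_of_sublist {d : ι → (M ⟶ H ⊗ M)}
    {ε : H ⟶ 𝟙_ C} {η : 𝟙_ C ⟶ H} (hε : ∀ i, d i ≫ (ε ▷ M) = (λ_ M).inv)
    (hηε : η ≫ ε = 𝟙 _) {l' l : List ι} (h : l'.Sublist l) :
    ∃ p : tensorPow H l.length ⟶ tensorPow H l'.length,
      coactList d l ≫ (p ▷ M) = coactList d l' ∧ unitPow η l.length ≫ p = unitPow η l'.length := by
  induction h with
  | slnil => exact ⟨𝟙 _, by simp, by simp⟩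
  | @cons l' l i _ ih =>
    obtain ⟨p, hp, hpη⟩ := ih
    exact ⟨(ε ▷ _) ≫ (λ_ _).hom ≫ p, (coactList_cons_whiskerRight_counit hε i l p).trans hp,
      (unitPow_succ_comp_counit hηε _ p).trans hpη⟩
  | cons_cons i _ ih =>
    obtain ⟨p, hp, hpη⟩ := ih
    refine ⟨H ◁ p, (coactList_cons_whiskerRight_whiskerLeft d i p).trans ?_,
      (unitPow_succ_comp_whiskerLeft η p).trans ?_⟩
    · rw [hp]
      rfl
    · rw [hpη]
      rfl

lemma comp_coactList_eq_of_sublist {X : C} {d : ι → (M ⟶ H ⊗ M)}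
    {ε : H ⟶ 𝟙_ C} {η : 𝟙_ C ⟶ H} (hε : ∀ i, d i ≫ (ε ▷ M) = (λ_ M).inv)
    (hηε : η ≫ ε = 𝟙 _) {l' l : List ι} (h : l'.Sublist l) {f : X ⟶ M}
    (hf : f ≫ coactList d l = f ≫ (λ_ M).inv ≫ (unitPow η l.length ▷ M)) :
    f ≫ coactList d l' = f ≫ (λ_ M).inv ≫ (unitPow η l'.length ▷ M) := by
  obtain ⟨p, hp, hpη⟩ := exists_proj_of_sublist hε hηε h
  rw [← hp, reassoc_of% hf, ← hpη]
  simp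

end Stmt5

open Stmt5

theorem equalisers_of_commuting_comodule_structures_general
    {C : Type*} [Category C] [MonoidalCategory C] [SymmetricCategory C]
    [HasEqualizers C] (H : Hopf C) {ι : Type*} {M : C}
    (d : ι → (M ⟶ H.X ⊗ M))
    (hd_counit : ∀ i, d i ≫ (ComonObj.counit (X := H.X) ▷ M) ≫ (λ_ M).hom = 𝟙 M)
    (l l' : List ι) (hsub : List.Sublist l' l) :
    (equalizer.ι (coactList d l)
        ((λ_ M).inv ≫ (unitPow (MonObj.one (X := H.X)) l.length ▷ M)) ≫ coactList d l' =
      equalizer.ι (coactList d l)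
        ((λ_ M).inv ≫ (unitPow (MonObj.one (X := H.X)) l.length ▷ M)) ≫
          ((λ_ M).inv ≫ (unitPow (MonObj.one (X := H.X)) l'.length ▷ M))) ∧
    (∃! ξ : equalizer (coactList d l)
          ((λ_ M).inv ≫ (unitPow (MonObj.one (X := H.X)) l.length ▷ M)) ⟶
        equalizer (coactList d l')
          ((λ_ M).inv ≫ (unitPow (MonObj.one (X := H.X)) l'.length ▷ M)),
      ξ ≫ equalizer.ι (coactList d l')
          ((λ_ M).inv ≫ (unitPow (MonObj.one (X := H.X)) l'.length ▷ M)) =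
        equalizer.ι (coactList d l)
          ((λ_ M).inv ≫ (unitPow (MonObj.one (X := H.X)) l.length ▷ M))) ∧
    (∀ ξ : equalizer (coactList d l)
          ((λ_ M).inv ≫ (unitPow (MonObj.one (X := H.X)) l.length ▷ M)) ⟶
        equalizer (coactList d l')
          ((λ_ M).inv ≫ (unitPow (MonObj.one (X := H.X)) l'.length ▷ M)),
      ξ ≫ equalizer.ι (coactList d l')
          ((λ_ M).inv ≫ (unitPow (MonObj.one (X := H.X)) l'.length ▷ M)) =
        equalizer.ι (coactList d l)
          ((λ_ M).inv ≫ (unitPow (MonObj.one (X := H.X)) l.length ▷ M)) → Mono ξ) := by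
  have hε : ∀ i, d i ≫ (ComonObj.counit (X := H.X) ▷ M) = (λ_ M).inv := fun i =>
    (Iso.comp_hom_eq_id (λ_ M)).mp (by simpa using hd_counit i)
  have hcoinv :=
    comp_coactList_eq_of_sublist hε (BimonObj.one_counit H.X) hsub (equalizer.condition _ _)
  exact ⟨hcoinv, ⟨equalizer.lift _ hcoinv, equalizer.lift_ι _ _,
    fun ξ hξ => equalizer.hom_ext (by rw [hξ, equalizer.lift_ι])⟩, fun ξ hξ => mono_of_mono_fac hξ⟩

/-- Let `C` be a symmetric monoidal category with equalisers, `H` a Hopf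
monoid in `C` and `(δ_i)` pairwise commuting `H`-comodule structures on `M`.  For a nonempty
subset `ℱ` (encoded as a duplicate-free list `l`) let `δ_ℱ` be the iterated coaction of
`H^{⊗|ℱ|}` and `ι_ℱ : M^{coℱ} → M` the equaliser of `δ_ℱ` and `η^{⊗|ℱ|} ⊗ 1_M`.  Then for
every nonempty subset `ℱ' ⊆ ℱ` (encoded as a sublist `l'` of `l`) one has
`δ_{ℱ'} ∘ ι_ℱ = (η^{⊗|ℱ'|} ⊗ 1_M) ∘ ι_ℱ`, there is a unique morphism
`ξ : M^{coℱ} → M^{coℱ'}` with `ι_{ℱ'} ∘ ξ = ι_ℱ`, and `ξ` is a monomorphism. -/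
theorem equalisers_of_commuting_comodule_structures
    {C : Type*} [Category C] [MonoidalCategory C] [SymmetricCategory C]
    [HasEqualizers C] (H : Hopf C) {ι : Type*} {M : C}
    (d : ι → (M ⟶ H.X ⊗ M))
    (hd_coassoc : ∀ i, d i ≫ (ComonObj.comul (X := H.X) ▷ M) =
      d i ≫ (H.X ◁ d i) ≫ (α_ H.X H.X M).inv)
    (hd_counit : ∀ i, d i ≫ (ComonObj.counit (X := H.X) ▷ M) ≫ (λ_ M).hom = 𝟙 M)
    (hcomm : ∀ i j, i ≠ j →
      d i ≫ (H.X ◁ d j) =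
        d j ≫ (H.X ◁ d i) ≫ (α_ H.X H.X M).inv ≫
          ((β_ H.X H.X).hom ▷ M) ≫ (α_ H.X H.X M).hom)
    (l l' : List ι) (hl : l.Nodup) (hsub : List.Sublist l' l) (hl' : l' ≠ []) :
    (equalizer.ι (coactList d l)
        ((λ_ M).inv ≫ (unitPow (MonObj.one (X := H.X)) l.length ▷ M)) ≫ coactList d l' =
      equalizer.ι (coactList d l)
        ((λ_ M).inv ≫ (unitPow (MonObj.one (X := H.X)) l.length ▷ M)) ≫
          ((λ_ M).inv ≫ (unitPow (MonObj.one (X := H.X)) l'.length ▷ M))) ∧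
    (∃! ξ : equalizer (coactList d l)
          ((λ_ M).inv ≫ (unitPow (MonObj.one (X := H.X)) l.length ▷ M)) ⟶
        equalizer (coactList d l')
          ((λ_ M).inv ≫ (unitPow (MonObj.one (X := H.X)) l'.length ▷ M)),
      ξ ≫ equalizer.ι (coactList d l')
          ((λ_ M).inv ≫ (unitPow (MonObj.one (X := H.X)) l'.length ▷ M)) =
        equalizer.ι (coactList d l)
          ((λ_ M).inv ≫ (unitPow (MonObj.one (X := H.X)) l.length ▷ M))) ∧
    (∀ ξ : equalizer (coactList d l)
          ((λ_ M).inv ≫ (unitPow (MonObj.one (X := H.X)) l.length ▷ M)) ⟶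
        equalizer (coactList d l')
          ((λ_ M).inv ≫ (unitPow (MonObj.one (X := H.X)) l'.length ▷ M)),
      ξ ≫ equalizer.ι (coactList d l')
          ((λ_ M).inv ≫ (unitPow (MonObj.one (X := H.X)) l'.length ▷ M)) =
        equalizer.ι (coactList d l)
          ((λ_ M).inv ≫ (unitPow (MonObj.one (X := H.X)) l.length ▷ M)) → Mono ξ) :=
  equalisers_of_commuting_comodule_structures_general H d hd_counit l l' hsub
end

section
/- Let (B, A, ▷, ∂) be a crossed module, K a group, ρ: K → B a group homomorphism, φ: K → A a 1-cocycle for the pulled-back action ρ*▷, and ψ: K → A a 1-cocycle for the pulled-back action ((∂∘φ)·ρ)*▷, where (∂∘φ)·ρ denotes the group homomorphism λ ↦ ∂(φ(λ))·ρ(λ). Then the pointwise product ψ·φ: K → A, λ ↦ ψ(λ)·φ(λ), is a 1-cocycle for ρ*▷. -/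
/-- Let `(B, A, ▷, ∂)` be a crossed module, `K` a group, `ρ : K →* B` a group
homomorphism, `f : K → A` a `1`-cocycle for the pulled-back action `ρ*▷`, and `p : K → A` a
`1`-cocycle for the action pulled back along the group homomorphism `l ↦ ∂(f l) * ρ l`.
Then the pointwise product `l ↦ p l * f l` is a `1`-cocycle for `ρ*▷`. -/
theorem crossedModule_cocycle_mul
    {K A B : Type*} [Group K] [Group A] [Group B]
    (act : B →* MulAut A) (d : A →* B)
    (peiffer₁ : ∀ (b : B) (a : A), d (act b a) = b * d a * b⁻¹)
    (peiffer₂ : ∀ a a' : A, act (d a) a' = a * a' * a⁻¹)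
    (ρ : K →* B) (f p : K → A)
    (hf : ∀ l m : K, f (l * m) = f l * act (ρ l) (f m))
    (hp : ∀ l m : K, p (l * m) = p l * act (d (f l) * ρ l) (p m)) :
    ∀ l m : K, p (l * m) * f (l * m) = (p l * f l) * act (ρ l) (p m * f m) := by
  intro l m
  rw [hf, hp, map_mul act, MulAut.mul_apply, peiffer₂, map_mul (act (ρ l))]
  group
end

section
/- Let (B, A, ▷, ∂) be a crossed module, K a group, ρ: K → B a group homomorphism and φ: K → A a 1-cocycle for the pulled-back action ρ*▷. Then the pointwise inverse φ⁻¹: K → A, λ ↦ φ(λ)⁻¹, is a 1-cocycle for the pulled-back action ((∂∘φ)·ρ)*▷, where (∂∘φ)·ρ denotes the group homomorphism λ ↦ ∂(φ(λ))·ρ(λ). -/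
/-- Let `(B, A, ▷, ∂)` be a crossed module, `K` a group, `ρ : K →* B` a group
homomorphism and `f : K → A` a `1`-cocycle for the pulled-back action `ρ*▷`. Then the
pointwise inverse `l ↦ (f l)⁻¹` is a `1`-cocycle for the action pulled back along the group
homomorphism `(∂∘f)·ρ : l ↦ ∂(f l) * ρ l`. -/
theorem crossedModule_cocycle_inv
    {K A B : Type*} [Group K] [Group A] [Group B]
    (act : B →* MulAut A) (d : A →* B)
    (peiffer₁ : ∀ (b : B) (a : A), d (act b a) = b * d a * b⁻¹)
    (peiffer₂ : ∀ a a' : A, act (d a) a' = a * a' * a⁻¹)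
    (ρ : K →* B) (f : K → A)
    (hf : ∀ l m : K, f (l * m) = f l * act (ρ l) (f m)) :
    ∀ l m : K, (f (l * m))⁻¹ = (f l)⁻¹ * act (d (f l) * ρ l) (f m)⁻¹ := by
  intro l m
  simp [hf, map_mul, MulAut.mul_apply, peiffer₂, mul_assoc]
end

section
/- Let H be a group and g ≥ 1, and let π₁(Σ) be the fundamental group of the closed oriented surface of genus g, presented as ⟨α₁,β₁,…,α_g,β_g | [β_g⁻¹,α_g]⋯[β₁⁻¹,α₁]⟩. Consider the action of H on the set S = {(a₁, b₁, …, a_g, b_g) ∈ H^{2g} : [b_g⁻¹, a_g]·…·[b₁⁻¹, a₁] = 1} by simultaneous conjugation, h▷(a₁, b₁, …, a_g, b_g) = (ha₁h⁻¹, hb₁h⁻¹, …, ha_gh⁻¹, hb_gh⁻¹), and the action of H on Hom(π₁(Σ), H) by pointwise conjugation. Then the bijection S ≅ Hom(π₁(Σ), H) given by ρ ↦ (ρ(α₁), …, ρ(β_g)) is H-equivariant and induces a bijection S/H ≅ Hom(π₁(Σ), H)/H between the orbit spaces; in particular, the protected object for the group H as a Hopf monoid in Set and the surface Σ is the representation variety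 Hom(π₁(Σ), H)/H. -/
open scoped commutatorElement

/-- The standard relator `[β_g⁻¹, α_g] ⋯ [β₁⁻¹, α₁]` of the fundamental group of the closed
oriented surface of genus `g`, as an element of the free group on the `2g` generators
`(i, false) = αᵢ` and `(i, true) = βᵢ`. -/
def surfaceRelator (g : ℕ) : FreeGroup (Fin g × Bool) :=
  ((List.ofFn fun i : Fin g =>
    ⁅(FreeGroup.of (i, true))⁻¹, FreeGroup.of (i, false)⁆).reverse).prod

/-- The fundamental group of the closed oriented surface of genus `g`, presented as
`⟨α₁, β₁, …, α_g, β_g ∣ [β_g⁻¹,α_g]⋯[β₁⁻¹,α₁]⟩`. -/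
def SurfaceGroup (g : ℕ) : Type :=
  PresentedGroup {surfaceRelator g}

noncomputable instance (g : ℕ) : Group (SurfaceGroup g) :=
  inferInstanceAs (Group (PresentedGroup {surfaceRelator g}))

/-- The generator `αᵢ` of the surface group. -/
def SurfaceGroup.a {g : ℕ} (i : Fin g) : SurfaceGroup g :=
  PresentedGroup.of (i, false)

/-- The generator `βᵢ` of the surface group. -/
def SurfaceGroup.b {g : ℕ} (i : Fin g) : SurfaceGroup g :=
  PresentedGroup.of (i, true)

/-- The tuples `(a₁, b₁, …, a_g, b_g) ∈ H^{2g}` satisfying the surface relation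
`[b_g⁻¹, a_g]⋯[b₁⁻¹, a₁] = 1`. -/
def SurfaceTuples (g : ℕ) (H : Type*) [Group H] : Type _ :=
  { v : Fin g → H × H //
    ((List.ofFn fun i : Fin g => ⁅((v i).2)⁻¹, (v i).1⁆).reverse).prod = 1 }

/-- Simultaneous conjugation: `w` is obtained from `v` by conjugating all entries by a single
element of `H`. -/
def conjTupleRel (g : ℕ) (H : Type*) [Group H] : (Fin g → H × H) → (Fin g → H × H) → Prop :=
  fun v w => ∃ h : H, ∀ i : Fin g,
    (w i).1 = h * (v i).1 * h⁻¹ ∧ (w i).2 = h * (v i).2 * h⁻¹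

/-- Pointwise conjugation of group homomorphisms: `ρ'` is obtained from `ρ` by conjugating
with a single element of `H`. -/
def conjHomRel (G H : Type*) [Group G] [Group H] : (G →* H) → (G →* H) → Prop :=
  fun ρ ρ' => ∃ h : H, ∀ x : G, ρ' x = h * ρ x * h⁻¹

/-!
Homomorphisms out of a presented group are the assignments of the generators that kill the
relators, so `ρ ↦ (ρ αᵢ, ρ βᵢ)ᵢ` identifies `Hom(π₁(Σ), H)` with `S`. Postcomposing with an inner
automorphism conjugates the tuple entrywise, and homomorphisms are determined by the generators,
so the two conjugation relations correspond and the bijection descends to orbit spaces. Since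
simultaneous conjugation is an equivalence relation on all of `H^{2g}`, the orbit space `S/H`
embeds into `H^{2g}/H`.
-/

section SurfaceWord

variable {K : Type*} [Group K] {g : ℕ}

def surfaceWord (v : Fin g → K × K) : K :=
  ((List.ofFn fun i : Fin g => ⁅((v i).2)⁻¹, (v i).1⁆).reverse).prod

theorem map_surfaceWord {L : Type*} [Group L] (φ : K →* L) (v : Fin g → K × K) :
    φ (surfaceWord v) = surfaceWord fun i => (φ (v i).1, φ (v i).2) := by
  rw [surfaceWord, map_list_prod, List.map_reverse, List.map_ofFn]
  simp only [Function.comp_def, map_commutatorElement, map_inv]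
  rfl

end SurfaceWord

theorem surfaceRelator_eq_surfaceWord (g : ℕ) :
    surfaceRelator g =
      surfaceWord fun i : Fin g => (FreeGroup.of (i, false), FreeGroup.of (i, true)) :=
  rfl

namespace SurfaceGroup

variable {H : Type*} [Group H] {g : ℕ}

theorem surfaceWord_generators : surfaceWord (fun i : Fin g => (a i, b i)) = 1 :=
  (map_surfaceWord (PresentedGroup.mk {surfaceRelator g})
    fun i : Fin g => (FreeGroup.of (i, false), FreeGroup.of (i, true))).symm.trans
    (PresentedGroup.one_of_mem rfl)

@[ext]
theorem hom_ext {φ ψ : SurfaceGroup g →* H} (ha : ∀ i, φ (a i) = ψ (a i))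
    (hb : ∀ i, φ (b i) = ψ (b i)) : φ = ψ :=
  PresentedGroup.ext fun
    | (i, false) => ha i
    | (i, true) => hb i

noncomputable def lift (v : SurfaceTuples g H) : SurfaceGroup g →* H :=
  PresentedGroup.toGroup (f := fun p : Fin g × Bool => cond p.2 (v.1 p.1).2 (v.1 p.1).1) <| by
    rintro r rfl
    rw [surfaceRelator_eq_surfaceWord, map_surfaceWord]
    simp only [FreeGroup.lift_apply_of]
    exact v.2

@[simp]
theorem lift_a (v : SurfaceTuples g H) (i : Fin g) : lift v (a i) = (v.1 i).1 :=
  PresentedGroup.toGroup.of _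

@[simp]
theorem lift_b (v : SurfaceTuples g H) (i : Fin g) : lift v (b i) = (v.1 i).2 :=
  PresentedGroup.toGroup.of _

variable (H g) in
noncomputable def homEquivTuples :
    (SurfaceGroup g →* H) ≃ SurfaceTuples g H where
  toFun ρ := ⟨fun i => (ρ (a i), ρ (b i)), show surfaceWord _ = 1 by
    rw [← map_surfaceWord ρ fun i => (a i, b i), surfaceWord_generators, map_one]⟩
  invFun := lift
  left_inv ρ := hom_ext (lift_a _) (lift_b _)
  right_inv v := Subtype.ext <| funext fun i => Prod.ext (lift_a v i) (lift_b v i)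

theorem conjHomRel_iff_conjTupleRel (ρ ρ' : SurfaceGroup g →* H) :
    conjHomRel (SurfaceGroup g) H ρ ρ' ↔
      conjTupleRel g H (homEquivTuples H g ρ).1 (homEquivTuples H g ρ').1 := by
  constructor
  · rintro ⟨h, hρ⟩
    exact ⟨h, fun i => ⟨hρ _, hρ _⟩⟩
  · rintro ⟨h, hρ⟩
    have hconj : ρ' = (MulAut.conj h).toMonoidHom.comp ρ :=
      hom_ext (fun i => (hρ i).1) (fun i => (hρ i).2)
    exact ⟨h, fun x => DFunLike.congr_fun hconj x⟩

variable (H g) in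
noncomputable def orbitEquivTupleOrbits :
    Quot (conjHomRel (SurfaceGroup g) H) ≃
      Quot fun v w : SurfaceTuples g H => conjTupleRel g H v.1 w.1 :=
  Quot.congr (homEquivTuples H g) conjHomRel_iff_conjTupleRel

end SurfaceGroup

theorem conjTupleRel_equivalence (g : ℕ) (H : Type*) [Group H] :
    Equivalence (conjTupleRel g H) where
  refl _ := ⟨1, fun _ => by simp⟩
  symm := by
    rintro v w ⟨h, hvw⟩
    exact ⟨h⁻¹, fun i => by rw [(hvw i).1, (hvw i).2]; constructor <;> group⟩
  trans := by
    rintro u v w ⟨h₁, huv⟩ ⟨h₂, hvw⟩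
    exact ⟨h₂ * h₁, fun i => by
      rw [(hvw i).1, (huv i).1, (hvw i).2, (huv i).2]; constructor <;> group⟩

noncomputable def Equivalence.quotComapEquivRange {α β : Type*} {r : α → α → Prop}
    (hr : Equivalence r) (f : β → α) :
    Quot (fun x y => r (f x) (f y)) ≃ {y : Quot r // ∃ x, y = Quot.mk r (f x)} :=
  Equiv.ofBijective
    (Quot.lift (fun x => ⟨Quot.mk r (f x), x, rfl⟩) fun _ _ hxy => Subtype.ext (Quot.sound hxy))
    ⟨by
      rintro ⟨x⟩ ⟨y⟩ hxy
      exact Quot.sound (hr.eqvGen_iff.mp (Quot.eqvGen_exact (congrArg Subtype.val hxy))),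
    by
      rintro ⟨_, x, rfl⟩
      exact ⟨Quot.mk _ x, rfl⟩⟩

theorem surfaceGroup_repVariety_protected_object_general
    {H : Type*} [Group H] (g : ℕ) :
    ∃ e : (SurfaceGroup g →* H) ≃ SurfaceTuples g H,
      (∀ (ρ : SurfaceGroup g →* H) (i : Fin g),
        ((e ρ).1 i) = (ρ (SurfaceGroup.a i), ρ (SurfaceGroup.b i))) ∧
      (∀ (h : H) (ρ : SurfaceGroup g →* H) (i : Fin g),
        (e ((MulAut.conj h).toMonoidHom.comp ρ)).1 i =
          (h * ((e ρ).1 i).1 * h⁻¹, h * ((e ρ).1 i).2 * h⁻¹)) ∧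
      (∀ ρ ρ' : SurfaceGroup g →* H,
        conjHomRel (SurfaceGroup g) H ρ ρ' ↔ conjTupleRel g H (e ρ).1 (e ρ').1) ∧
      (∃ q : Quot (fun ρ ρ' : SurfaceGroup g →* H => conjHomRel (SurfaceGroup g) H ρ ρ') ≃
          Quot (fun v w : SurfaceTuples g H => conjTupleRel g H v.1 w.1),
        ∀ ρ : SurfaceGroup g →* H, q (Quot.mk _ ρ) = Quot.mk _ (e ρ)) ∧
      (∃ p : Quot (fun ρ ρ' : SurfaceGroup g →* H => conjHomRel (SurfaceGroup g) H ρ ρ') ≃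
          { y : Quot (conjTupleRel g H) // ∃ v : SurfaceTuples g H, y = Quot.mk _ v.1 },
        ∀ ρ : SurfaceGroup g →* H,
          (p (Quot.mk _ ρ) : Quot (conjTupleRel g H)) = Quot.mk _ (e ρ).1) := by
  let q := SurfaceGroup.orbitEquivTupleOrbits H g
  refine ⟨SurfaceGroup.homEquivTuples H g, fun _ _ => rfl, fun _ _ _ => rfl,
    SurfaceGroup.conjHomRel_iff_conjTupleRel, ⟨q, fun _ => rfl⟩,
    ⟨q.trans ((conjTupleRel_equivalence g H).quotComapEquivRange Subtype.val), fun _ => rfl⟩⟩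

/-- The bijection between `Hom(π₁(Σ), H)` and the set `S` of `2g`-tuples
satisfying the surface relation is `H`-equivariant for the conjugation actions, and induces a
bijection `Hom(π₁(Σ), H)/H ≅ S/H` of the orbit spaces.  In particular, the protected object
for the group `H` in `Set` — the image of `S` in the quotient of `H^{2g}` by simultaneous
conjugation — is in bijection with the representation variety `Hom(π₁(Σ), H)/H`. -/
theorem surfaceGroup_repVariety_protected_object
    {H : Type*} [Group H] (g : ℕ) (hg : 1 ≤ g) :
    ∃ e : (SurfaceGroup g →* H) ≃ SurfaceTuples g H,
      (∀ (ρ : SurfaceGroup g →* H) (i : Fin g),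
        ((e ρ).1 i) = (ρ (SurfaceGroup.a i), ρ (SurfaceGroup.b i))) ∧
      (∀ (h : H) (ρ : SurfaceGroup g →* H) (i : Fin g),
        (e ((MulAut.conj h).toMonoidHom.comp ρ)).1 i =
          (h * ((e ρ).1 i).1 * h⁻¹, h * ((e ρ).1 i).2 * h⁻¹)) ∧
      (∀ ρ ρ' : SurfaceGroup g →* H,
        conjHomRel (SurfaceGroup g) H ρ ρ' ↔ conjTupleRel g H (e ρ).1 (e ρ').1) ∧
      (∃ q : Quot (fun ρ ρ' : SurfaceGroup g →* H => conjHomRel (SurfaceGroup g) H ρ ρ') ≃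
          Quot (fun v w : SurfaceTuples g H => conjTupleRel g H v.1 w.1),
        ∀ ρ : SurfaceGroup g →* H, q (Quot.mk _ ρ) = Quot.mk _ (e ρ)) ∧
      (∃ p : Quot (fun ρ ρ' : SurfaceGroup g →* H => conjHomRel (SurfaceGroup g) H ρ ρ') ≃
          { y : Quot (conjTupleRel g H) // ∃ v : SurfaceTuples g H, y = Quot.mk _ v.1 },
        ∀ ρ : SurfaceGroup g →* H,
          (p (Quot.mk _ ρ) : Quot (conjTupleRel g H)) = Quot.mk _ (e ρ).1) :=
  surfaceGroup_repVariety_protected_object_general g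
end

section
/- Let k be a commutative ring, G a finite group and g ≥ 1, and let π₁(Σ) be the presented group ⟨α₁,β₁,…,α_g,β_g | [β_g⁻¹,α_g]⋯[β₁⁻¹,α₁]⟩. Let M be the free k-module on the set G^{2g}, let N ⊆ M be the k-submodule spanned by all elements x − h·x, where h ∈ G acts on x ∈ G^{2g} by simultaneous conjugation, and let q: M → M/N be the quotient map. Let S = {(a₁, b₁, …, a_g, b_g) ∈ G^{2g} : [b_g⁻¹, a_g]·…·[b₁⁻¹, a₁] = 1}. Then the image q(⟨S⟩_k) of the k-span of S is a free k-module with basis in bijection with the orbit set S/G ≅ Hom(π₁(Σ), G)/G, the basis element for an orbit being q(x) for any representative x of the orbit. In other words, the protected object for the group algebra k[G] as a Hopf monoid in k-Mod and the surface Σ is the free k-module generated by the representation variety Hom(π₁(Σ), G)/G. -/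
open scoped commutatorElement

/-- Simultaneous conjugation of a `2g`-tuple by a group element. -/
def conjTuple {G : Type*} [Group G] {g : ℕ} (h : G) (v : Fin g → G × G) : Fin g → G × G :=
  fun i => (h * (v i).1 * h⁻¹, h * (v i).2 * h⁻¹)

/-- The set of tuples `(a₁, b₁, …, a_g, b_g) ∈ G^{2g}` satisfying the surface relation. -/
def surfaceTupleSet (g : ℕ) (G : Type*) [Group G] : Set (Fin g → G × G) :=
  { v | ((List.ofFn fun i : Fin g => ⁅((v i).2)⁻¹, (v i).1⁆).reverse).prod = 1 }

/-! Sending `ρ` to `(ρ αᵢ, ρ βᵢ)ᵢ` identifies `Hom(π₁(Σ), G)` with `S`, and pointwise conjugation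
of homomorphisms with simultaneous conjugation of tuples. For any `G`-set `X`, the class of `x` in
`(X →₀ k) ⧸ N` only depends on the orbit of `x`, and these orbit classes are linearly independent:
the map `X →₀ k → (X/G →₀ k)` induced by `x ↦ Gx` kills `N` and sends them to distinct basis
vectors. The orbit classes of the points of `S` span `q(⟨S⟩)`, so they form a basis of it. -/

open MulAction Submodule

namespace PresentedGroup

variable {α G : Type*} [Group G] {rels : Set (FreeGroup α)}

lemma lift_comp_of_eq_one (φ : PresentedGroup rels →* G) {r : FreeGroup α} (hr : r ∈ rels) :
    FreeGroup.lift (fun a => φ (of a)) r = 1 := by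
  have hcomp : FreeGroup.lift (fun a => φ (of a)) = φ.comp (mk rels) :=
    FreeGroup.lift.apply_symm_apply (φ.comp (mk rels))
  rw [hcomp, MonoidHom.comp_apply, one_of_mem hr, map_one]

def homEquiv :
    (PresentedGroup rels →* G) ≃ {f : α → G // ∀ r ∈ rels, FreeGroup.lift f r = 1} where
  toFun φ := ⟨fun a => φ (of a), fun _ hr => lift_comp_of_eq_one φ hr⟩
  invFun f := toGroup f.2
  left_inv _ := ext fun _ => toGroup.of _
  right_inv _ := Subtype.ext (funext fun _ => toGroup.of _)

end PresentedGroup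

section SurfaceGroup

variable {G : Type*} [Group G] {g : ℕ}

lemma FreeGroup.lift_surfaceRelator (f : Fin g × Bool → G) :
    FreeGroup.lift f (surfaceRelator g) =
      ((List.ofFn fun i : Fin g => ⁅(f (i, true))⁻¹, f (i, false)⁆).reverse).prod := by
  simp [surfaceRelator, map_list_prod, List.map_reverse, List.map_ofFn, Function.comp_def,
    map_commutatorElement]

def surfaceRelationSolutionsEquiv :
    {f : Fin g × Bool → G // ∀ r ∈ ({surfaceRelator g} : Set _), FreeGroup.lift f r = 1} ≃
      surfaceTupleSet g G where
  toFun f := ⟨fun i => (f.1 (i, false), f.1 (i, true)),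
    (FreeGroup.lift_surfaceRelator f.1).symm.trans (f.2 _ rfl)⟩
  invFun v := ⟨fun p => cond p.2 (v.1 p.1).2 (v.1 p.1).1, by
    rintro r rfl
    exact (FreeGroup.lift_surfaceRelator _).trans v.2⟩
  left_inv f := by
    ext ⟨i, b⟩
    cases b <;> rfl
  right_inv _ := rfl

def SurfaceGroup.homEquiv : (SurfaceGroup g →* G) ≃ surfaceTupleSet g G :=
  PresentedGroup.homEquiv.trans surfaceRelationSolutionsEquiv

lemma SurfaceGroup.homEquiv_apply (ρ : SurfaceGroup g →* G) (i : Fin g) :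
    (homEquiv ρ : Fin g → G × G) i = (ρ (a i), ρ (b i)) :=
  rfl

lemma conjTuple_eq_smul (h : G) (v : Fin g → G × G) :
    conjTuple h v = ConjAct.toConjAct h • v := by
  funext i
  simp [conjTuple, Prod.smul_def, ConjAct.smul_def]

lemma SurfaceGroup.homEquiv_conj (h : G) (ρ : SurfaceGroup g →* G) :
    (homEquiv ((MulAut.conj h).toMonoidHom.comp ρ) : Fin g → G × G) =
      conjTuple h (homEquiv ρ) :=
  rfl

lemma conjHomRel_iff_mem_orbit {ρ ρ' : SurfaceGroup g →* G} :
    conjHomRel (SurfaceGroup g) G ρ ρ' ↔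
      (SurfaceGroup.homEquiv ρ' : Fin g → G × G) ∈
        orbit (ConjAct G) (SurfaceGroup.homEquiv ρ : Fin g → G × G) := by
  simp only [conjHomRel, mem_orbit_iff, ConjAct.toConjAct.surjective.exists, ← conjTuple_eq_smul,
    ← SurfaceGroup.homEquiv_conj, SetCoe.ext_iff, SurfaceGroup.homEquiv.apply_eq_iff_eq,
    MonoidHom.ext_iff]
  exact exists_congr fun _ => forall_congr' fun _ => eq_comm

end SurfaceGroup

section OrbitClasses

variable (k G X : Type*) [CommRing k] [Group G] [MulAction G X]

noncomputable def orbitDiffSubmodule : Submodule k (X →₀ k) :=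
  span k {z | ∃ (x : X) (h : G), z = Finsupp.single x 1 - Finsupp.single (h • x) 1}

lemma orbitDiffSubmodule_le_ker_lmapDomain :
    orbitDiffSubmodule k G X ≤
      LinearMap.ker (Finsupp.lmapDomain k k (Quotient.mk (orbitRel G X))) := by
  rw [orbitDiffSubmodule, span_le]
  rintro _ ⟨x, h, rfl⟩
  simp only [SetLike.mem_coe, LinearMap.mem_ker, map_sub, Finsupp.lmapDomain_apply,
    Finsupp.mapDomain_single, sub_eq_zero]
  rw [Quotient.sound (s := orbitRel G X) (mem_orbit x h)]

lemma mkQ_single_smul (h : G) (x : X) :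
    (orbitDiffSubmodule k G X).mkQ (Finsupp.single (h • x) 1) =
      (orbitDiffSubmodule k G X).mkQ (Finsupp.single x 1) := by
  refine (sub_eq_zero.1 ?_).symm
  rw [← map_sub, mkQ_apply, Quotient.mk_eq_zero]
  exact subset_span ⟨x, h, rfl⟩

noncomputable def orbitClass : orbitRel.Quotient G X → (X →₀ k) ⧸ orbitDiffSubmodule k G X :=
  Quotient.lift (fun x => (orbitDiffSubmodule k G X).mkQ (Finsupp.single x 1)) <| by
    intro _ x hx
    obtain ⟨h, rfl⟩ := mem_orbit_iff.1 hx
    exact mkQ_single_smul k G X h x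

lemma linearIndependent_orbitClass : LinearIndependent k (orbitClass k G X) := by
  let toOrbits := (orbitDiffSubmodule k G X).liftQ _ (orbitDiffSubmodule_le_ker_lmapDomain k G X)
  have toOrbits_orbitClass : toOrbits ∘ orbitClass k G X = fun o => Finsupp.single o 1 := by
    funext o
    induction o using Quotient.inductionOn with
    | h x => exact Finsupp.mapDomain_single
  refine LinearIndependent.of_comp toOrbits ?_
  rw [toOrbits_orbitClass]
  exact Finsupp.linearIndependent_single_one k _

lemma span_orbitClass_image_mk (S : Set X) :
    span k (orbitClass k G X '' (Quotient.mk _ '' S)) =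
      (span k ((fun x => Finsupp.single x (1 : k)) '' S)).map (orbitDiffSubmodule k G X).mkQ := by
  rw [map_span, Set.image_image, Set.image_image]
  rfl

end OrbitClasses

section RepresentationVariety

variable {G : Type*} [Group G] {g : ℕ}

def repClassToOrbit :
    Quot (conjHomRel (SurfaceGroup g) G) → orbitRel.Quotient (ConjAct G) (Fin g → G × G) :=
  Quot.lift (fun ρ => ⟦(SurfaceGroup.homEquiv ρ : Fin g → G × G)⟧) fun _ _ hρ =>
    (Quotient.sound (conjHomRel_iff_mem_orbit.1 hρ)).symm

lemma repClassToOrbit_injective : Function.Injective (repClassToOrbit (G := G) (g := g)) := by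
  rintro ⟨ρ⟩ ⟨ρ'⟩ h
  exact (Quot.sound (conjHomRel_iff_mem_orbit.2 (Quotient.exact h))).symm

lemma range_repClassToOrbit :
    Set.range (repClassToOrbit (G := G) (g := g)) = Quotient.mk _ '' surfaceTupleSet g G := by
  ext o
  constructor
  · rintro ⟨⟨ρ⟩, rfl⟩
    exact ⟨_, (SurfaceGroup.homEquiv ρ).2, rfl⟩
  · rintro ⟨v, hv, rfl⟩
    exact ⟨Quot.mk _ (SurfaceGroup.homEquiv.symm ⟨v, hv⟩), by simp [repClassToOrbit]⟩

lemma orbitDiffSubmodule_conjAct (k : Type*) [CommRing k] :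
    orbitDiffSubmodule k (ConjAct G) (Fin g → G × G) = span k
      {z | ∃ (x : Fin g → G × G) (h : G),
        z = Finsupp.single x (1 : k) - Finsupp.single (conjTuple h x) (1 : k)} := by
  simp_rw [orbitDiffSubmodule, conjTuple_eq_smul, ConjAct.toConjAct.surjective.exists]

end RepresentationVariety

theorem groupAlgebra_protected_object_free_on_repVariety_general
    (k : Type*) [CommRing k] (G : Type*) [Group G] (g : ℕ)
    (N : Submodule k ((Fin g → G × G) →₀ k))
    (hN : N = Submodule.span k
      { z | ∃ (x : Fin g → G × G) (h : G),
          z = Finsupp.single x (1 : k) - Finsupp.single (conjTuple h x) (1 : k) }) :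
    ∃ (e : (SurfaceGroup g →* G) ≃ surfaceTupleSet g G)
      (bas : Module.Basis (Quot (fun ρ ρ' : SurfaceGroup g →* G => conjHomRel (SurfaceGroup g) G ρ ρ'))
        k (Submodule.map N.mkQ
            (Submodule.span k ((fun v : Fin g → G × G => Finsupp.single v (1 : k)) ''
              surfaceTupleSet g G)))),
      (∀ (ρ : SurfaceGroup g →* G) (i : Fin g),
        ((e ρ : Fin g → G × G) i) = (ρ (SurfaceGroup.a i), ρ (SurfaceGroup.b i))) ∧
      (∀ ρ : SurfaceGroup g →* G,
        ((bas (Quot.mk _ ρ) : ((Fin g → G × G) →₀ k) ⧸ N)) =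
          N.mkQ (Finsupp.single (e ρ : Fin g → G × G) (1 : k))) := by
  obtain rfl := hN.trans (orbitDiffSubmodule_conjAct k).symm
  let c := orbitClass k (ConjAct G) (Fin g → G × G) ∘ repClassToOrbit
  have hc : LinearIndependent k c :=
    (linearIndependent_orbitClass k _ _).comp _ repClassToOrbit_injective
  have hspan : span k (Set.range c) =
      (span k ((fun v => Finsupp.single v (1 : k)) '' surfaceTupleSet g G)).map
        (orbitDiffSubmodule k (ConjAct G) (Fin g → G × G)).mkQ := by
    rw [Set.range_comp, range_repClassToOrbit, span_orbitClass_image_mk]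
  refine ⟨SurfaceGroup.homEquiv, (Module.Basis.span hc).map (LinearEquiv.ofEq _ _ hspan),
    SurfaceGroup.homEquiv_apply, fun ρ => ?_⟩
  rw [Module.Basis.map_apply, LinearEquiv.coe_ofEq_apply, Module.Basis.span_apply]
  rfl

/-- Let `k` be a commutative ring, `G` a finite group and `g ≥ 1`.  Let
`M = k⟨G^{2g}⟩` be the free `k`-module on `G^{2g}`, `N ⊆ M` the submodule spanned by the
elements `x − h·x` (simultaneous conjugation) and `q : M → M/N` the quotient map.  Then the
image under `q` of the `k`-span of the set `S` of tuples satisfying the surface relation is a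
free `k`-module with basis indexed by `Hom(π₁(Σ), G)/G ≅ S/G`, the basis element of the class
of `ρ` being `q(x)` for the corresponding representative tuple `x ∈ S`.  This is the protected
object for the group algebra `k[G]` as a Hopf monoid in `k`-Mod and the genus-`g` surface. -/
theorem groupAlgebra_protected_object_free_on_repVariety
    (k : Type*) [CommRing k] (G : Type*) [Group G] [Finite G] (g : ℕ) (hg : 1 ≤ g)
    (N : Submodule k ((Fin g → G × G) →₀ k))
    (hN : N = Submodule.span k
      { z | ∃ (x : Fin g → G × G) (h : G),
          z = Finsupp.single x (1 : k) - Finsupp.single (conjTuple h x) (1 : k) }) :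
    ∃ (e : (SurfaceGroup g →* G) ≃ surfaceTupleSet g G)
      (bas : Module.Basis (Quot (fun ρ ρ' : SurfaceGroup g →* G => conjHomRel (SurfaceGroup g) G ρ ρ'))
        k (Submodule.map N.mkQ
            (Submodule.span k ((fun v : Fin g → G × G => Finsupp.single v (1 : k)) ''
              surfaceTupleSet g G)))),
      (∀ (ρ : SurfaceGroup g →* G) (i : Fin g),
        ((e ρ : Fin g → G × G) i) = (ρ (SurfaceGroup.a i), ρ (SurfaceGroup.b i))) ∧
      (∀ ρ : SurfaceGroup g →* G,
        ((bas (Quot.mk _ ρ) : ((Fin g → G × G) →₀ k) ⧸ N)) =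
          N.mkQ (Finsupp.single (e ρ : Fin g → G × G) (1 : k))) :=
  groupAlgebra_protected_object_free_on_repVariety_general k G g N hN
end

section
/- Let k be a commutative ring, G a finite group and g ≥ 1, and let π₁(Σ) be the presented group ⟨α₁,β₁,…,α_g,β_g | [β_g⁻¹,α_g]⋯[β₁⁻¹,α₁]⟩. Let S = {(a₁, b₁, …, a_g, b_g) ∈ G^{2g} : [b_g⁻¹, a_g]·…·[b₁⁻¹, a₁] = 1}, a subset of G^{2g} invariant under simultaneous conjugation. Then the image of the restriction map {f: G^{2g} → k : f is constant on simultaneous-conjugation orbits} → Map(S, k), f ↦ f|_S, consists exactly of the functions on S that are constant on G-orbits, and is therefore in bijection (as a k-module) with Map(S/G, k) ≅ Map(Hom(π₁(Σ), G)/G, k). In other words, the protected object for the dual Hopf monoid k[G]* in k-Mod and the surface Σ is the k-module of maps Hom(π₁(Σ), G)/G → k. -/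
open scoped commutatorElement

/- ### Auxiliary material -/

/-- The relator product of a tuple. -/
def relProd {G : Type*} [Group G] {g : ℕ} (v : Fin g → G × G) : G :=
  ((List.ofFn fun i : Fin g => ⁅((v i).2)⁻¹, (v i).1⁆).reverse).prod

theorem mem_surfaceTupleSet_iff {G : Type*} [Group G] {g : ℕ} (v : Fin g → G × G) :
    v ∈ surfaceTupleSet g G ↔ relProd v = 1 := Iff.rfl

theorem map_relProd {G H : Type*} [Group G] [Group H] {g : ℕ} (φ : G →* H)
    (v : Fin g → G × G) :
    φ (relProd v) = relProd (fun i => (φ (v i).1, φ (v i).2)) := by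
  simp only [relProd, map_list_prod, List.map_reverse, List.map_ofFn]
  simp [Function.comp_def, commutatorElement_def]

theorem relProd_conjTuple {G : Type*} [Group G] {g : ℕ} (h : G) (v : Fin g → G × G) :
    relProd (conjTuple h v) = h * relProd v * h⁻¹ := by
  have h1 : conjTuple h v =
      fun i => ((MulAut.conj h).toMonoidHom (v i).1, (MulAut.conj h).toMonoidHom (v i).2) := by
    funext i; simp [conjTuple, MulAut.conj_apply]
  rw [h1, ← map_relProd]
  simp [MulAut.conj_apply]

theorem conjTuple_mem_iff {G : Type*} [Group G] {g : ℕ} (h : G) (v : Fin g → G × G) :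
    conjTuple h v ∈ surfaceTupleSet g G ↔ v ∈ surfaceTupleSet g G := by
  rw [mem_surfaceTupleSet_iff, mem_surfaceTupleSet_iff, relProd_conjTuple]
  constructor
  · intro hc
    have := congrArg (fun z => h⁻¹ * z * h) hc
    simpa [mul_assoc] using this
  · intro hc; simp [hc]

theorem surfaceRelator_eq (g : ℕ) :
    surfaceRelator g =
      relProd (fun i : Fin g => (FreeGroup.of (i, false), FreeGroup.of (i, true))) := rfl

theorem surfaceGroup_rel (g : ℕ) :
    relProd (fun i : Fin g => (SurfaceGroup.a i, SurfaceGroup.b i)) = 1 := by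
  have h1 := map_relProd (QuotientGroup.mk' (Subgroup.normalClosure {surfaceRelator g}))
      (fun i : Fin g => (FreeGroup.of (i, false), FreeGroup.of (i, true)))
  have h2 : (QuotientGroup.mk' (Subgroup.normalClosure {surfaceRelator g}))
      (surfaceRelator g) = 1 := by
    rw [QuotientGroup.mk'_apply, QuotientGroup.eq_one_iff]
    exact Subgroup.subset_normalClosure rfl
  exact h1.symm.trans h2

/-- The function on generators associated to a tuple. -/
def tupleFun {G : Type*} [Group G] {g : ℕ} (v : Fin g → G × G) : Fin g × Bool → G :=
  fun p => cond p.2 ((v p.1).2) ((v p.1).1)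

theorem tupleFun_rel {G : Type*} [Group G] {g : ℕ} (v : surfaceTupleSet g G) :
    ∀ r ∈ ({surfaceRelator g} : Set (FreeGroup (Fin g × Bool))),
      FreeGroup.lift (tupleFun v.1) r = 1 := by
  intro r hr
  rw [Set.mem_singleton_iff] at hr
  subst hr
  rw [surfaceRelator_eq, map_relProd]
  have : (fun i : Fin g =>
      (FreeGroup.lift (tupleFun v.1) (FreeGroup.of (i, false)),
       FreeGroup.lift (tupleFun v.1) (FreeGroup.of (i, true)))) = v.1 := by
    funext i
    simp [tupleFun]
  rw [this]
  exact v.2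

/-- The homomorphism `π₁(Σ) → G` associated to a tuple satisfying the surface relation. -/
noncomputable def tupleToHom {G : Type*} [Group G] {g : ℕ} (v : surfaceTupleSet g G) :
    SurfaceGroup g →* G :=
  PresentedGroup.toGroup (tupleFun_rel v)

theorem tupleToHom_a {G : Type*} [Group G] {g : ℕ} (v : surfaceTupleSet g G) (i : Fin g) :
    tupleToHom v (SurfaceGroup.a i) = (v.1 i).1 :=
  PresentedGroup.toGroup.of (tupleFun_rel v)

theorem tupleToHom_b {G : Type*} [Group G] {g : ℕ} (v : surfaceTupleSet g G) (i : Fin g) :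
    tupleToHom v (SurfaceGroup.b i) = (v.1 i).2 :=
  PresentedGroup.toGroup.of (tupleFun_rel v)

/-- The tuple associated to a homomorphism `π₁(Σ) → G`. -/
noncomputable def homToTuple {G : Type*} [Group G] {g : ℕ} (ρ : SurfaceGroup g →* G) :
    surfaceTupleSet g G :=
  ⟨fun i => (ρ (SurfaceGroup.a i), ρ (SurfaceGroup.b i)), by
    rw [mem_surfaceTupleSet_iff]
    have := map_relProd ρ (fun i : Fin g => (SurfaceGroup.a i, SurfaceGroup.b i))
    rw [surfaceGroup_rel, map_one] at this
    exact this.symm⟩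

theorem homToTuple_tupleToHom {G : Type*} [Group G] {g : ℕ} (v : surfaceTupleSet g G) :
    homToTuple (tupleToHom v) = v := by
  apply Subtype.ext
  funext i
  show (tupleToHom v (SurfaceGroup.a i), tupleToHom v (SurfaceGroup.b i)) = v.1 i
  rw [tupleToHom_a, tupleToHom_b]

theorem tupleToHom_homToTuple {G : Type*} [Group G] {g : ℕ} (ρ : SurfaceGroup g →* G) :
    tupleToHom (homToTuple ρ) = ρ := by
  refine PresentedGroup.ext fun x => ?_
  rcases x with ⟨i, b⟩
  cases b
  · exact tupleToHom_a (homToTuple ρ) i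
  · exact tupleToHom_b (homToTuple ρ) i

theorem tupleToHom_conj {G : Type*} [Group G] {g : ℕ} {v w : surfaceTupleSet g G} {h : G}
    (hw : w.1 = conjTuple h v.1) :
    ∀ x, tupleToHom w x = h * tupleToHom v x * h⁻¹ := by
  have key : tupleToHom w = ((MulAut.conj h).toMonoidHom).comp (tupleToHom v) := by
    refine PresentedGroup.ext fun x => ?_
    rcases x with ⟨i, b⟩
    cases b
    · show tupleToHom w (SurfaceGroup.a i) = (MulAut.conj h) (tupleToHom v (SurfaceGroup.a i))
      rw [tupleToHom_a, tupleToHom_a, hw]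
      simp [conjTuple, MulAut.conj_apply]
    · show tupleToHom w (SurfaceGroup.b i) = (MulAut.conj h) (tupleToHom v (SurfaceGroup.b i))
      rw [tupleToHom_b, tupleToHom_b, hw]
      simp [conjTuple, MulAut.conj_apply]
  intro x
  rw [key]
  simp [MulAut.conj_apply]

/-- Let `k` be a commutative ring, `G` a finite group, `g ≥ 1`, and `S` the
(conjugation-invariant) set of tuples in `G^{2g}` satisfying the surface relation.  Then the
image of the restriction map `{f : G^{2g} → k ∣ f constant on simultaneous-conjugation orbits}
→ Map(S, k)` consists exactly of the functions on `S` that are constant on `G`-orbits, and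
this image is, as a `k`-module, in bijection with `Map(Hom(π₁(Σ), G)/G, k)`.  This is the
protected object for the dual Hopf monoid `k[G]*` in `k`-Mod and the genus-`g` surface. -/
theorem dual_groupAlgebra_protected_object
    (k : Type*) [CommRing k] (G : Type*) [Group G] [Finite G] (g : ℕ) (hg : 1 ≤ g)
    (Binv : Submodule k ((surfaceTupleSet g G) → k))
    (hB : (Binv : Set ((surfaceTupleSet g G) → k)) =
      { u | ∀ v w : surfaceTupleSet g G, (∃ h : G, w.1 = conjTuple h v.1) → u w = u v }) :
    ((fun f : (Fin g → G × G) → k => fun v : surfaceTupleSet g G => f v.1) ''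
        { f | ∀ (h : G) (x : Fin g → G × G), f (conjTuple h x) = f x } =
      (Binv : Set ((surfaceTupleSet g G) → k))) ∧
    (∃ le : Binv ≃ₗ[k]
        ((Quot (fun ρ ρ' : SurfaceGroup g →* G => conjHomRel (SurfaceGroup g) G ρ ρ')) → k),
      ∀ (u : Binv) (ρ : SurfaceGroup g →* G) (v : surfaceTupleSet g G),
        (∀ i : Fin g, v.1 i = (ρ (SurfaceGroup.a i), ρ (SurfaceGroup.b i))) →
          le u (Quot.mk _ ρ) = u.1 v) := by
  classical
  have hBmem : ∀ u : Binv, ∀ v w : surfaceTupleSet g G,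
      (∃ h : G, w.1 = conjTuple h v.1) → u.1 w = u.1 v := by
    intro u
    have hu := u.2
    rw [← SetLike.mem_coe, hB] at hu
    exact hu
  constructor
  · apply Set.Subset.antisymm
    · rintro _ ⟨f, hf, rfl⟩
      rw [hB]
      rintro v w ⟨h, hw⟩
      show f w.1 = f v.1
      rw [hw, hf]
    · intro u hu
      rw [hB] at hu
      refine ⟨fun x => if hx : x ∈ surfaceTupleSet g G then u ⟨x, hx⟩ else 0, ?_, ?_⟩
      · intro h x
        beta_reduce
        by_cases hx : x ∈ surfaceTupleSet g G
        · rw [dif_pos hx, dif_pos ((conjTuple_mem_iff h x).mpr hx)]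
          exact hu ⟨x, hx⟩ ⟨conjTuple h x, (conjTuple_mem_iff h x).mpr hx⟩ ⟨h, rfl⟩
        · rw [dif_neg hx, dif_neg (fun hc => hx ((conjTuple_mem_iff h x).mp hc))]
      · funext v
        simp only [dif_pos v.2]
  · have wd : ∀ u : Binv, ∀ ρ ρ' : SurfaceGroup g →* G,
        conjHomRel (SurfaceGroup g) G ρ ρ' → u.1 (homToTuple ρ) = u.1 (homToTuple ρ') := by
      rintro u ρ ρ' ⟨h, hh⟩
      refine (hBmem u (homToTuple ρ) (homToTuple ρ') ⟨h, ?_⟩).symm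
      funext i
      show (ρ' (SurfaceGroup.a i), ρ' (SurfaceGroup.b i)) = _
      simp [conjTuple, homToTuple, hh]
    refine ⟨{
      toFun := fun u q => Quot.lift (fun ρ => u.1 (homToTuple ρ)) (wd u) q
      map_add' := by
        intro u u'
        funext q
        induction q using Quot.ind with
        | _ ρ => simp
      map_smul' := by
        intro c u
        funext q
        induction q using Quot.ind with
        | _ ρ => simp
      invFun := fun F => ⟨fun v => F (Quot.mk _ (tupleToHom v)), by
        rw [← SetLike.mem_coe, hB]
        rintro v w ⟨h, hw⟩
        show F (Quot.mk _ (tupleToHom w)) = F (Quot.mk _ (tupleToHom v))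
        exact (congrArg F (Quot.sound ⟨h, tupleToHom_conj hw⟩)).symm⟩
      left_inv := by
        intro u
        apply Subtype.ext
        funext v
        show u.1 (homToTuple (tupleToHom v)) = u.1 v
        rw [homToTuple_tupleToHom]
      right_inv := by
        intro F
        funext q
        induction q using Quot.ind with
        | _ ρ =>
          show F (Quot.mk _ (tupleToHom (homToTuple ρ))) = F (Quot.mk _ ρ)
          rw [tupleToHom_homToTuple] }, ?_⟩
    intro u ρ v hv
    show u.1 (homToTuple ρ) = u.1 v
    have hveq : homToTuple ρ = v := Subtype.ext (funext fun i => (hv i).symm)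
    rw [hveq]
end
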